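/- arXiv:1806.07762 — 3 statements merged into one kernel-verified Lean document; each statement's English description precedes it below -/
import Mathlib

section
/- Let m be a positive integer. Then λ(2m) = (-1)^{m-1} ( π^{2m}/(2^{2m+1}·(2m-1)!) + Σ_{k=1}^{m-1} (-1)^{m-k} · π^{2k}/(2^{2k}·(2k)!) · λ(2m-2k) ). -/
/-!
Summing geometric series, `∑_{j ≥ 1} λ(2j) x^{2j} = (πx/4) tan(πx/2)`; multiplying by
`cos(πx/2)` leaves `(πx/4) sin(πx/2)`, and comparing coefficients of `x^{2m}` gives the
recurrence. To make this formal, Euler's evaluation of `ζ(2j)` gives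
`λ(2j) = (-1)^(j+1) π^(2j) tanhCoeff j`, which turns the recurrence into the identity
`X tanh(X/2) · 2 cosh(X/2) = X · 2 sinh(X/2)` in `ℚ⟦X⟧`, a consequence of
`bernoulliPowerSeries * (exp - 1) = X`. The signs come from passing from `tan` to `tanh`.
-/

open Real Finset

/-- The Dirichlet lambda function at a natural-number argument `j`:
`λ(j) = ∑_{n=0}^∞ 1/(2n+1)^j`. -/
noncomputable def dirichletLambda (j : ℕ) : ℝ := ∑' n : ℕ, 1 / (2 * (n : ℝ) + 1) ^ j

open Nat PowerSeries

/-- The coefficient of `x ^ (2 * j)` in `(x / 4) * tanh (x / 2)`. -/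
def tanhCoeff (j : ℕ) : ℚ := (4 ^ j - 1) * bernoulli (2 * j) / (2 * (2 * j)!)

theorem tanhCoeff_zero : tanhCoeff 0 = 0 := by
  simp [tanhCoeff]

theorem dirichletLambda_eq_mul_tsum {s : ℕ} (hs : 1 < s) :
    dirichletLambda s = (1 - 1 / 2 ^ s) * ∑' n : ℕ, 1 / (n : ℝ) ^ s := by
  have hsum : Summable fun n : ℕ => 1 / (n : ℝ) ^ s := Real.summable_one_div_nat_pow.mpr hs
  have heven : (fun k : ℕ => 1 / ((2 * k : ℕ) : ℝ) ^ s) =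
      fun k : ℕ => 1 / 2 ^ s * (1 / (k : ℝ) ^ s) := by
    ext k; push_cast; rw [mul_pow, one_div_mul_one_div]
  have hodd : (fun k : ℕ => 1 / ((2 * k + 1 : ℕ) : ℝ) ^ s) =
      fun k : ℕ => 1 / (2 * (k : ℝ) + 1) ^ s := by
    ext k; push_cast; rfl
  have hsplit := tsum_even_add_odd (f := fun n : ℕ => 1 / (n : ℝ) ^ s)
    (hsum.comp_injective fun _ _ h => by simpa using h)
    (hsum.comp_injective fun _ _ h => by simpa using h)
  simp only [heven, hodd, tsum_mul_left] at hsplit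
  rw [dirichletLambda]
  linear_combination hsplit

theorem dirichletLambda_two_mul {j : ℕ} (hj : j ≠ 0) :
    dirichletLambda (2 * j) = (-1) ^ (j + 1) * π ^ (2 * j) * tanhCoeff j := by
  have h4 : (2 : ℝ) ^ (2 * j) = 4 ^ j := by rw [pow_mul]; norm_num
  have h2 : (2 : ℝ) ^ (2 * j - 1) = 4 ^ j / 2 := by
    rw [← h4, eq_div_iff two_ne_zero, ← pow_succ, Nat.sub_add_cancel (by omega)]
  rw [dirichletLambda_eq_mul_tsum (by omega), (hasSum_zeta_nat hj).tsum_eq, tanhCoeff, h4, h2]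
  push_cast
  field_simp

theorem neg_one_pow_sub_mul_dirichletLambda_two_mul_sub {m k : ℕ} (hkm : k < m) :
    (-1 : ℝ) ^ (m - k) * π ^ (2 * k) * dirichletLambda (2 * m - 2 * k) =
      -(π ^ (2 * m) * tanhCoeff (m - k)) := by
  have hsign : (-1 : ℝ) ^ (m - k) * (-1) ^ (m - k + 1) = -1 := by
    rw [← pow_add]; exact Odd.neg_one_pow ⟨m - k, by ring⟩
  have hpi : π ^ (2 * k) * π ^ (2 * (m - k)) = π ^ (2 * m) := by
    rw [← pow_add]; congr 1; omega
  rw [show 2 * m - 2 * k = 2 * (m - k) by omega, dirichletLambda_two_mul (by omega)]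
  linear_combination (π ^ (2 * k) * π ^ (2 * (m - k)) * tanhCoeff (m - k)) * hsign -
    (tanhCoeff (m - k) : ℝ) * hpi

theorem PowerSeries.coeff_two_mul_mul_of_coeff_odd_eq_zero {R : Type*} [Semiring R] {f : R⟦X⟧}
    (hf : ∀ n, Odd n → coeff n f = 0) (g : R⟦X⟧) (m : ℕ) :
    coeff (2 * m) (f * g) = ∑ p ∈ antidiagonal m, coeff (2 * p.1) f * coeff (2 * p.2) g := by
  let double : ℕ × ℕ ↪ ℕ × ℕ :=
    ⟨fun p => (2 * p.1, 2 * p.2), fun p q h => by simp only [Prod.mk.injEq] at h; ext <;> omega⟩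
  have hsub : (antidiagonal m).map double ⊆ antidiagonal (2 * m) := by
    intro p hp
    obtain ⟨q, hq, rfl⟩ := mem_map.mp hp
    rw [HasAntidiagonal.mem_antidiagonal] at hq ⊢
    show 2 * q.1 + 2 * q.2 = 2 * m
    omega
  rw [coeff_mul, ← sum_subset hsub, sum_map]
  · rfl
  intro p hp hnot
  suffices Odd p.1 by rw [hf _ this, zero_mul]
  rw [HasAntidiagonal.mem_antidiagonal] at hp
  by_contra hev
  obtain ⟨i, hi⟩ := Nat.not_odd_iff_even.mp hev
  refine hnot (mem_map.mpr ⟨(i, m - i), HasAntidiagonal.mem_antidiagonal.mpr (by omega), ?_⟩)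
  show (2 * i, 2 * (m - i)) = p
  ext <;> dsimp only <;> omega

/-- `X * tanh (X / 2) = X - 2X / (e^X + 1)`, using
`2X / (e^{2X} - 1) - X / (e^X - 1) = -X / (e^X + 1)`. -/
noncomputable def tanhSeries : ℚ⟦X⟧ :=
  2 * (rescale 2 (bernoulliPowerSeries ℚ) - bernoulliPowerSeries ℚ) + X

theorem coeff_tanhSeries_two_mul (j : ℕ) : coeff (2 * j) tanhSeries = 4 * tanhCoeff j := by
  rw [tanhSeries, ← map_ofNat C 2, map_add, coeff_C_mul]
  simp only [map_sub, coeff_rescale, bernoulliPowerSeries, coeff_mk, coeff_X,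
    Algebra.algebraMap_self, RingHom.id_apply]
  rw [if_neg (by omega), add_zero, tanhCoeff, pow_mul]
  norm_num
  ring

theorem coeff_exp_add_exp_neg (a : ℚ) (n : ℕ) :
    coeff n (rescale a (exp ℚ) + rescale (-a) (exp ℚ)) = (a ^ n + (-a) ^ n) / n ! := by
  simp only [map_add, coeff_rescale, coeff_exp, Algebra.algebraMap_self, RingHom.id_apply]
  ring

theorem coeff_exp_sub_exp_neg (a : ℚ) (n : ℕ) :
    coeff n (rescale a (exp ℚ) - rescale (-a) (exp ℚ)) = (a ^ n - (-a) ^ n) / n ! := by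
  simp only [map_sub, coeff_rescale, coeff_exp, Algebra.algebraMap_self, RingHom.id_apply]
  ring

theorem tanhSeries_mul_exp_add_exp_neg :
    tanhSeries * (rescale 2⁻¹ (exp ℚ) + rescale (-2⁻¹) (exp ℚ)) =
      X * (rescale 2⁻¹ (exp ℚ) - rescale (-2⁻¹) (exp ℚ)) := by
  set e := rescale (2⁻¹ : ℚ) (exp ℚ)
  set e' := rescale (-2⁻¹ : ℚ) (exp ℚ)
  have he : e * e' = 1 := by
    rw [exp_mul_exp_eq_exp_add]; norm_num
  have hexp : exp ℚ = e ^ 2 := by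
    rw [sq, exp_mul_exp_eq_exp_add]; norm_num
  have hexp2 : rescale 2 (exp ℚ) = e ^ 4 := by
    rw [show 4 = 2 * 2 from rfl, pow_mul, ← hexp, exp_pow_eq_rescale_exp]; norm_num
  have hB : bernoulliPowerSeries ℚ * (e ^ 2 - 1) = X := by
    rw [← hexp, bernoulliPowerSeries_mul_exp_sub_one]
  have hB2 : rescale 2 (bernoulliPowerSeries ℚ) * (e ^ 4 - 1) = 2 * X := by
    have := congrArg (rescale (2 : ℚ)) (bernoulliPowerSeries_mul_exp_sub_one ℚ)
    rwa [map_mul, map_sub, map_one, hexp2, rescale_X, map_ofNat] at this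
  have hne : e * (e ^ 4 - 1) ≠ 0 := by
    refine mul_ne_zero (fun h => ?_) (fun h => ?_)
    · simpa [e] using congrArg (coeff 0) h
    · simpa [← hexp2, coeff_rescale, coeff_exp] using congrArg (coeff 1) h
  -- clearing the denominators `e` (of `e' = e⁻¹`) and `e ^ 4 - 1` leaves a polynomial identity
  apply mul_right_cancel₀ hne
  rw [tanhSeries]
  set B := bernoulliPowerSeries ℚ
  linear_combination (2 * (e ^ 2 + 1)) * hB2 - (2 * (e ^ 2 + 1) ^ 2) * hB +
    ((e ^ 4 - 1) * (2 * rescale 2 B - 2 * B + 2 * X)) * he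

theorem sum_range_tanhCoeff_div (n : ℕ) :
    ∑ k ∈ range (n + 2), tanhCoeff (n + 1 - k) / (2 ^ (2 * k) * (2 * k)!) =
      1 / (2 ^ (2 * n + 3) * (2 * n + 1)!) := by
  have hodd (n : ℕ) (hn : Odd n) :
      coeff n (rescale 2⁻¹ (exp ℚ) + rescale (-2⁻¹) (exp ℚ)) = 0 := by
    rw [coeff_exp_add_exp_neg, hn.neg_pow, add_neg_cancel, zero_div]
  have h := congrArg (coeff (2 * (n + 1))) tanhSeries_mul_exp_add_exp_neg
  rw [mul_comm tanhSeries, coeff_two_mul_mul_of_coeff_odd_eq_zero hodd,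
    Nat.sum_antidiagonal_eq_sum_range_succ (fun i j => coeff (2 * i) _ * coeff (2 * j) _),
    show 2 * (n + 1) = 2 * n + 1 + 1 by ring, coeff_succ_X_mul, coeff_exp_sub_exp_neg] at h
  simp only [coeff_exp_add_exp_neg, coeff_tanhSeries_two_mul] at h
  have hterm : ∀ k, (2⁻¹ ^ (2 * k) + (-2⁻¹) ^ (2 * k)) / ((2 * k)! : ℚ) *
      (4 * tanhCoeff (n + 1 - k)) =
        8 * (tanhCoeff (n + 1 - k) / (2 ^ (2 * k) * (2 * k)!)) := by
    intro k
    rw [(even_two_mul k).neg_pow, inv_pow]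
    field_simp
    ring
  rw [sum_congr rfl fun k _ => hterm k, ← mul_sum, (odd_two_mul_add_one n).neg_pow,
    sub_neg_eq_add] at h
  rw [← mul_right_inj' (show (8 : ℚ) ≠ 0 by norm_num), h, inv_pow]
  field_simp
  ring

theorem tanhCoeff_add_sum_Icc {m : ℕ} (hm : 0 < m) :
    tanhCoeff m + ∑ k ∈ Icc 1 (m - 1), tanhCoeff (m - k) / (2 ^ (2 * k) * (2 * k)!) =
      1 / (2 ^ (2 * m + 1) * (2 * m - 1)!) := by
  obtain ⟨n, rfl⟩ : ∃ n, m = n + 1 := ⟨m - 1, by omega⟩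
  have h := sum_range_tanhCoeff_div n
  rw [sum_range_succ, range_eq_Ico, sum_eq_sum_Ico_succ_bot n.succ_pos] at h
  rw [show 2 * (n + 1) + 1 = 2 * n + 3 by ring, show 2 * (n + 1) - 1 = 2 * n + 1 by omega]
  simpa [tanhCoeff_zero, Ico_add_one_right_eq_Icc] using h

theorem lambda_recurrence_lettington_analogue (m : ℕ) (hm : 0 < m) :
    dirichletLambda (2 * m) =
      (-1 : ℝ) ^ (m - 1) *
        (π ^ (2 * m) / (2 ^ (2 * m + 1) * (Nat.factorial (2 * m - 1))) +
          ∑ k ∈ Finset.Icc 1 (m - 1),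
            (-1 : ℝ) ^ (m - k) * (π ^ (2 * k) / (2 ^ (2 * k) * (Nat.factorial (2 * k)))) *
              dirichletLambda (2 * m - 2 * k)) := by
  have hterm : ∀ k ∈ Icc 1 (m - 1),
      (-1 : ℝ) ^ (m - k) * (π ^ (2 * k) / (2 ^ (2 * k) * (2 * k)!)) *
          dirichletLambda (2 * m - 2 * k) =
        -(π ^ (2 * m) * ((tanhCoeff (m - k) : ℝ) / (2 ^ (2 * k) * (2 * k)!))) := by
    intro k hk
    have hkm : k < m := by rw [mem_Icc] at hk; omega
    linear_combination (1 / (2 ^ (2 * k) * (2 * k)! : ℝ)) *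
      neg_one_pow_sub_mul_dirichletLambda_two_mul_sub hkm
  have hcoeff := congrArg (Rat.cast : ℚ → ℝ) (tanhCoeff_add_sum_Icc hm)
  push_cast at hcoeff
  have hsign : (-1 : ℝ) ^ (m + 1) = (-1) ^ (m - 1) := by
    rw [show m + 1 = m - 1 + 2 by omega, pow_add, neg_one_sq, mul_one]
  rw [dirichletLambda_two_mul hm.ne', sum_congr rfl hterm, sum_neg_distrib, ← mul_sum, hsign]
  linear_combination ((-1 : ℝ) ^ (m - 1) * π ^ (2 * m)) * hcoeff
end

section
/- Let n be a positive integer and m a positive integer. Then ((-1)^{m+1}/4) · ( 2·Σ_{j=1}^{n-1} (-1)^j j^{2m} + (-1)^n n^{2m} ) · π^{2m+2}/(2m)! + (-1)^n · Σ_{k=1}^{m} (-1)^k n^{2k-1} · π^{2k}/(2k-1)! · λ(2m-2k+2) = 0. -/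
open Real Finset

/-!
Write `H(x) = x tanh (x/2) = x (eˣ - 1)/(eˣ + 1)`, an even power series with `H(0) = 0`, whose
coefficients are, up to sign and a factor `π^{2k}/4`, the values `λ(2k) = (1 - 4⁻ᵏ) ζ(2k)`.
Multiplying `H (eˣ + 1) = x (eˣ - 1)` by `e^{nx}` gives
`[x^{2m+1}] (e^{(n+1)x} H) + [x^{2m+1}] (e^{nx} H) = ((n+1)^{2m} - n^{2m})/(2m)!`, so
`(-1)ⁿ [x^{2m+1}] (e^{nx} H)` is the alternating power sum of the statement; expanding the same
coefficient as a Cauchy product gives the sum over `λ(2m - 2k + 2)`.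
-/

open PowerSeries

section XTanhHalf

variable (K : Type*) [Field K] [CharZero K]

/-- `x tanh (x/2) = x + 2 (B(2x) - B(x))`, where `B(x) = x/(eˣ - 1)`. -/
noncomputable def xTanhHalfSeries : PowerSeries K :=
  X + 2 * (rescale 2 (bernoulliPowerSeries K) - bernoulliPowerSeries K)

variable {K}

theorem coeff_xTanhHalfSeries (j : ℕ) :
    coeff j (xTanhHalfSeries K) =
      2 * (2 ^ j - 1) * bernoulli j / j.factorial + if j = 1 then 1 else 0 := by
  rw [xTanhHalfSeries, two_mul]
  simp only [map_add, map_sub, coeff_rescale, coeff_X, bernoulliPowerSeries, coeff_mk]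
  rw [eq_ratCast (algebraMap ℚ K)]
  push_cast
  split_ifs <;> ring

theorem coeff_xTanhHalfSeries_of_odd {j : ℕ} (hj : Odd j) : coeff j (xTanhHalfSeries K) = 0 := by
  rcases eq_or_ne j 1 with rfl | hj1
  · norm_num [coeff_xTanhHalfSeries]
  · rw [coeff_xTanhHalfSeries, if_neg hj1, bernoulli_eq_bernoulli'_of_ne_one hj1,
      bernoulli'_eq_zero_of_odd hj (by obtain ⟨t, rfl⟩ := hj; omega)]
    simp

theorem coeff_zero_xTanhHalfSeries : coeff 0 (xTanhHalfSeries K) = 0 := by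
  simp [coeff_xTanhHalfSeries]

theorem xTanhHalfSeries_mul_exp_add_one :
    xTanhHalfSeries K * (exp K + 1) = X * (exp K - 1) := by
  have hB : bernoulliPowerSeries K * (exp K - 1) = X := bernoulliPowerSeries_mul_exp_sub_one K
  have hB2 : rescale (2 : K) (bernoulliPowerSeries K) * (exp K ^ 2 - 1) = 2 * X := by
    have h := congrArg (rescale (2 : K)) hB
    rw [map_mul, map_sub, map_one, rescale_X] at h
    rwa [← map_ofNat (C (R := K)) 2, exp_pow_eq_rescale_exp, Nat.cast_ofNat]
  have hexp : exp K - 1 ≠ 0 := fun h ↦ by simpa [coeff_exp] using congrArg (coeff 1) h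
  apply mul_right_cancel₀ hexp
  rw [xTanhHalfSeries]
  linear_combination 2 * hB2 - 2 * (exp K + 1) * hB

theorem coeff_exp_pow (n j : ℕ) : coeff j (exp K ^ n) = (n : K) ^ j / j.factorial := by
  rw [exp_pow_eq_rescale_exp, coeff_rescale, coeff_exp]
  simp [div_eq_mul_inv]

theorem coeff_exp_pow_succ_mul_xTanhHalfSeries_add (n j : ℕ) :
    coeff (j + 1) (exp K ^ (n + 1) * xTanhHalfSeries K) +
        coeff (j + 1) (exp K ^ n * xTanhHalfSeries K) =
      ((n + 1 : K) ^ j - (n : K) ^ j) / j.factorial := by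
  have h : exp K ^ (n + 1) * xTanhHalfSeries K + exp K ^ n * xTanhHalfSeries K =
      X * (exp K ^ (n + 1) - exp K ^ n) := by
    linear_combination exp K ^ n * xTanhHalfSeries_mul_exp_add_one (K := K)
  rw [← map_add, h, coeff_succ_X_mul, map_sub, coeff_exp_pow, coeff_exp_pow]
  push_cast
  ring

theorem coeff_odd_exp_pow_mul_xTanhHalfSeries (n m : ℕ) :
    coeff (2 * m + 1) (exp K ^ n * xTanhHalfSeries K) =
      ∑ k ∈ Icc 1 m, (n : K) ^ (2 * k - 1) / (2 * k - 1).factorial *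
        coeff (2 * m - 2 * k + 2) (xTanhHalfSeries K) := by
  set g : ℕ → K := fun i ↦ (n : K) ^ i / i.factorial * coeff (2 * m + 1 - i) (xTanhHalfSeries K)
  have hg : coeff (2 * m + 1) (exp K ^ n * xTanhHalfSeries K) = ∑ i ∈ range (2 * m + 2), g i := by
    rw [coeff_mul, Nat.sum_antidiagonal_eq_sum_range_succ_mk]
    simp only [g, coeff_exp_pow]
  have himage : ∑ k ∈ Icc 1 m, g (2 * k - 1) = ∑ i ∈ (Icc 1 m).image (2 * · - 1), g i :=
    (sum_image fun a ha b hb hab ↦ by simp only [coe_Icc, Set.mem_Icc] at ha hb; omega).symm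
  have hsubset : ∑ i ∈ (Icc 1 m).image (2 * · - 1), g i = ∑ i ∈ range (2 * m + 2), g i := by
    refine sum_subset (fun i ↦ by simp only [mem_image, mem_Icc, mem_range]; omega) ?_
    intro i hi hi'
    simp only [mem_image, mem_Icc, mem_range, not_exists, not_and] at hi hi'
    suffices coeff (2 * m + 1 - i) (xTanhHalfSeries K) = 0 by simp [g, this]
    rcases Nat.even_or_odd i with ⟨t, rfl⟩ | ⟨t, rfl⟩
    · exact coeff_xTanhHalfSeries_of_odd ⟨m - t, by omega⟩
    · have : t = m := by by_contra h; exact hi' (t + 1) (by omega) (by omega)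
      simp [this, coeff_zero_xTanhHalfSeries]
  rw [hg, ← hsubset, ← himage]
  refine sum_congr rfl fun k hk ↦ ?_
  simp only [mem_Icc] at hk
  simp only [g, show 2 * m + 1 - (2 * k - 1) = 2 * m - 2 * k + 2 by omega]

theorem neg_one_pow_mul_coeff_exp_pow_mul_xTanhHalfSeries {m : ℕ} (hm : 0 < m) (n : ℕ) :
    (-1) ^ n * coeff (2 * m + 1) (exp K ^ n * xTanhHalfSeries K) =
      (2 * ∑ j ∈ Icc 1 (n - 1), (-1 : K) ^ j * (j : K) ^ (2 * m) +
        (-1) ^ n * (n : K) ^ (2 * m)) / (2 * m).factorial := by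
  induction n with
  | zero =>
    simp [coeff_xTanhHalfSeries_of_odd (odd_two_mul_add_one m), hm.ne']
  | succ n ih =>
    have hstep := coeff_exp_pow_succ_mul_xTanhHalfSeries_add (K := K) n (2 * m)
    have hsum : ∑ j ∈ Icc 1 n, (-1 : K) ^ j * (j : K) ^ (2 * m) =
        ∑ j ∈ Icc 1 (n - 1), (-1 : K) ^ j * (j : K) ^ (2 * m) + (-1) ^ n * (n : K) ^ (2 * m) := by
      rcases n with _ | n
      · simp [hm.ne']
      · rw [sum_Icc_succ_top (by omega), Nat.add_sub_cancel]
    rw [Nat.add_sub_cancel, hsum]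
    push_cast
    linear_combination (-1) ^ (n + 1) * hstep + ih

end XTanhHalf

theorem hasSum_one_div_odd_pow {p : ℕ} {z : ℝ} (h : HasSum (fun n : ℕ ↦ 1 / (n : ℝ) ^ p) z) :
    HasSum (fun n : ℕ ↦ 1 / (2 * (n : ℝ) + 1) ^ p) ((1 - 1 / 2 ^ p) * z) := by
  have heven : HasSum (fun n : ℕ ↦ 1 / ((2 * n : ℕ) : ℝ) ^ p) (1 / 2 ^ p * z) := by
    simpa [mul_pow, mul_comm] using h.mul_left (2 ^ p)⁻¹
  obtain ⟨s, hodd⟩ : Summable (fun n : ℕ ↦ 1 / ((2 * n + 1 : ℕ) : ℝ) ^ p) :=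
    h.summable.comp_injective fun a b hab ↦ by simpa using hab
  have hz : z = 1 / 2 ^ p * z + s := h.unique (heven.even_add_odd hodd)
  convert hodd using 1
  · ext n
    push_cast
    rfl
  · linarith

theorem dirichletLambda_two_mul_s6 {k : ℕ} (hk : k ≠ 0) :
    dirichletLambda (2 * k) =
      (-1) ^ (k + 1) * π ^ (2 * k) * coeff (2 * k) (xTanhHalfSeries ℝ) / 4 := by
  rw [dirichletLambda, (hasSum_one_div_odd_pow (hasSum_zeta_nat hk)).tsum_eq,
    coeff_xTanhHalfSeries, if_neg (by omega)]
  obtain ⟨j, rfl⟩ : ∃ j, k = j + 1 := ⟨k - 1, by omega⟩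
  rw [show 2 * (j + 1) - 1 = 2 * j + 1 by omega]
  field_simp
  ring

theorem lambda_recurrence_integer_even_general (n m : ℕ) (hm : 0 < m) :
    (-1 : ℝ) ^ (m + 1) / 4 *
        (2 * ∑ j ∈ Finset.Icc 1 (n - 1), (-1 : ℝ) ^ j * (j : ℝ) ^ (2 * m) +
          (-1 : ℝ) ^ n * (n : ℝ) ^ (2 * m)) * (π ^ (2 * m + 2) / (Nat.factorial (2 * m))) +
      (-1 : ℝ) ^ n *
        ∑ k ∈ Finset.Icc 1 m,
          (-1 : ℝ) ^ k * (n : ℝ) ^ (2 * k - 1) * (π ^ (2 * k) / (Nat.factorial (2 * k - 1))) *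
            dirichletLambda (2 * m - 2 * k + 2) = 0 := by
  have hterm : ∀ k ∈ Icc 1 m,
      (-1 : ℝ) ^ k * (n : ℝ) ^ (2 * k - 1) * (π ^ (2 * k) / (2 * k - 1).factorial) *
          dirichletLambda (2 * m - 2 * k + 2) =
        (-1) ^ m * π ^ (2 * m + 2) / 4 * ((n : ℝ) ^ (2 * k - 1) / (2 * k - 1).factorial *
          coeff (2 * m - 2 * k + 2) (xTanhHalfSeries ℝ)) := by
    intro k hk
    obtain ⟨d, rfl⟩ := Nat.exists_eq_add_of_le (mem_Icc.mp hk).2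
    rw [show 2 * (k + d) - 2 * k + 2 = 2 * (d + 1) by omega,
      dirichletLambda_two_mul_s6 d.add_one_ne_zero]
    ring
  rw [sum_congr rfl hterm, ← mul_sum, ← coeff_odd_exp_pow_mul_xTanhHalfSeries]
  linear_combination (-1) ^ m * π ^ (2 * m + 2) / 4 *
    neg_one_pow_mul_coeff_exp_pow_mul_xTanhHalfSeries (K := ℝ) hm n

theorem lambda_recurrence_integer_even (n m : ℕ) (hn : 0 < n) (hm : 0 < m) :
    (-1 : ℝ) ^ (m + 1) / 4 *
        (2 * ∑ j ∈ Finset.Icc 1 (n - 1), (-1 : ℝ) ^ j * (j : ℝ) ^ (2 * m) +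
          (-1 : ℝ) ^ n * (n : ℝ) ^ (2 * m)) * (π ^ (2 * m + 2) / (Nat.factorial (2 * m))) +
      (-1 : ℝ) ^ n *
        ∑ k ∈ Finset.Icc 1 m,
          (-1 : ℝ) ^ k * (n : ℝ) ^ (2 * k - 1) * (π ^ (2 * k) / (Nat.factorial (2 * k - 1))) *
            dirichletLambda (2 * m - 2 * k + 2) = 0 :=
  lambda_recurrence_integer_even_general n m hm
end

section
/- Let m be a positive integer and t a real number. Then Σ_{k=1}^{m} (-1)^k · ( π^{2m-2k}/(2m-2k+1)! ) · ( t^{2k-1}/(2k-1)! ) = - ( (π² + t²)^m / (π·(2m)!) ) · sin( 2m·arctan(t/π) ). -/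
/-! Up to the factor `-1 / (π (2m)!)`, the sum is the binomial expansion of the imaginary part
of `(π + t i)^(2m)`; in polar form this imaginary part is `(π² + t²)^m sin (2m arctan (t / π))`. -/

open Real Finset

theorem Finset.sum_range_two_mul {M : Type*} [AddCommMonoid M] (f : ℕ → M) (n : ℕ) :
    ∑ j ∈ range (2 * n), f j = ∑ i ∈ range n, (f (2 * i) + f (2 * i + 1)) := by
  induction n with
  | zero => simp
  | succ n ih => rw [Nat.mul_succ, sum_range_succ, sum_range_succ, ih, sum_range_succ, add_assoc]

namespace Complex

theorem I_pow_two_mul (i : ℕ) : I ^ (2 * i) = (-1) ^ i := by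
  rw [pow_mul, I_sq]

theorem im_ofReal_add_mul_I_pow_two_mul (x y : ℝ) (m : ℕ) :
    ((x + y * I) ^ (2 * m)).im =
      ∑ k ∈ range m, (-1) ^ k * (2 * m).choose (2 * k + 1) * x ^ (2 * m - (2 * k + 1)) *
        y ^ (2 * k + 1) := by
  have hterm (j : ℕ) : ((y * I) ^ j * x ^ (2 * m - j) * (2 * m).choose j).im =
      (I ^ j).im * ((2 * m).choose j * x ^ (2 * m - j) * y ^ j) := by
    rw [show (y * I) ^ j * x ^ (2 * m - j) * (2 * m).choose j =
      (((2 * m).choose j * x ^ (2 * m - j) * y ^ j : ℝ) : ℂ) * I ^ j by push_cast; ring,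
      im_ofReal_mul, mul_comm]
  have heven (i : ℕ) : (I ^ (2 * i)).im = 0 := by
    rw [I_pow_two_mul]; norm_cast
  have hodd (i : ℕ) : (I ^ (2 * i + 1)).im = (-1) ^ i := by
    rw [pow_succ, I_pow_two_mul, mul_I_im]; norm_cast
  rw [add_comm, add_pow, im_sum, sum_range_succ, sum_range_two_mul]
  simp only [hterm, heven, hodd, zero_mul, zero_add, add_zero]
  simp only [mul_assoc]

theorem arg_eq_arctan {z : ℂ} (hz : 0 < z.re) : arg z = Real.arctan (z.im / z.re) := by
  have := abs_lt.1 (abs_arg_lt_pi_div_two_iff.2 (Or.inl hz))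
  rw [← tan_arg, Real.arctan_tan this.1 this.2]

theorem im_pow (z : ℂ) (n : ℕ) : (z ^ n).im = ‖z‖ ^ n * Real.sin (n * arg z) := by
  conv_lhs => rw [← norm_mul_exp_arg_mul_I z]
  rw [mul_pow, ← exp_nat_mul, ← ofReal_pow, im_ofReal_mul, ← mul_assoc, ← ofReal_natCast,
    ← ofReal_mul, exp_ofReal_mul_I_im]

theorem im_ofReal_add_mul_I_pow_two_mul_of_pos {x : ℝ} (hx : 0 < x) (y : ℝ) (m : ℕ) :
    ((x + y * I) ^ (2 * m)).im =
      (x ^ 2 + y ^ 2) ^ m * Real.sin (2 * m * Real.arctan (y / x)) := by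
  rw [im_pow, arg_eq_arctan (by simpa using hx), pow_mul, Complex.sq_norm, normSq_add_mul_I]
  simp

end Complex

theorem sum_eq_sin_arctan_general (m : ℕ) (t : ℝ) :
    ∑ k ∈ Finset.Icc 1 m,
        (-1 : ℝ) ^ k * (π ^ (2 * m - 2 * k) / (Nat.factorial (2 * m - 2 * k + 1))) *
          (t ^ (2 * k - 1) / (Nat.factorial (2 * k - 1))) =
      -((π ^ 2 + t ^ 2) ^ m / (π * (Nat.factorial (2 * m)))) *
        Real.sin (2 * m * Real.arctan (t / π)) := by
  have hterm (i : ℕ) (hi : i ∈ range m) :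
      (-1 : ℝ) ^ (1 + i) * (π ^ (2 * m - 2 * (1 + i)) / (2 * m - 2 * (1 + i) + 1).factorial) *
          (t ^ (2 * (1 + i) - 1) / (2 * (1 + i) - 1).factorial) =
        -(1 / (π * (2 * m).factorial)) * ((-1) ^ i * (2 * m).choose (2 * i + 1) *
          π ^ (2 * m - (2 * i + 1)) * t ^ (2 * i + 1)) := by
    have hi : i < m := mem_range.1 hi
    have hpow : π ^ (2 * m - (2 * i + 1)) = π ^ (2 * m - 2 * (1 + i)) * π := by
      rw [← pow_succ]; congr 1; omega
    rw [show 2 * (1 + i) - 1 = 2 * i + 1 by omega,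
      show 2 * m - 2 * (1 + i) + 1 = 2 * m - (2 * i + 1) by omega, hpow,
      Nat.cast_choose ℝ (by omega : 2 * i + 1 ≤ 2 * m)]
    field_simp
    ring
  rw [← Ico_add_one_right_eq_Icc, sum_Ico_eq_sum_range, Nat.add_sub_cancel,
    sum_congr rfl hterm, ← mul_sum, ← Complex.im_ofReal_add_mul_I_pow_two_mul,
    Complex.im_ofReal_add_mul_I_pow_two_mul_of_pos pi_pos]
  ring

theorem sum_eq_sin_arctan (m : ℕ) (hm : 0 < m) (t : ℝ) :
    ∑ k ∈ Finset.Icc 1 m,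
        (-1 : ℝ) ^ k * (π ^ (2 * m - 2 * k) / (Nat.factorial (2 * m - 2 * k + 1))) *
          (t ^ (2 * k - 1) / (Nat.factorial (2 * k - 1))) =
      -((π ^ 2 + t ^ 2) ^ m / (π * (Nat.factorial (2 * m)))) *
        Real.sin (2 * m * Real.arctan (t / π)) :=
  sum_eq_sin_arctan_general m t
end
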